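/- arXiv:1708.07255 — 4 statements merged into one kernel-verified Lean document; each statement's English description precedes it below -/
import Mathlib

section
/- If C ⊆ S is preserved and is a cover of some of its elements, then C is L-admissible and not stable. -/
open Finset

/-- Monomials in `n` variables, identified with their exponent vectors. -/
abbrev Monomial (n : ℕ) := Fin n →₀ ℕ

/-- The lcm of the monomials indexed by `A`: the pointwise supremum. -/
noncomputable def mlcm {n μ : ℕ} (m : Fin μ → Monomial n) (A : Finset (Fin μ)) : Monomial n :=
  A.sup m

/-- `F` is L-admissible: for every non-maximal index `h` of `F` and every index `q < h`,
the monomial `m q` does not divide the lcm of the tail `{j ∈ F : h ≤ j}`. -/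
def LAdmissible {n μ : ℕ} (m : Fin μ → Monomial n) (F : Finset (Fin μ)) : Prop :=
  ∀ h ∈ F, (∃ j ∈ F, h < j) →
    ∀ q : Fin μ, q < h → ¬ m q ≤ mlcm m (F.filter (fun j => h ≤ j))

/-- A nonempty `D ⊆ S` is broken if some `u ∈ S` divides `lcm D` and precedes every element of `D`. -/
def Broken {n μ : ℕ} (m : Fin μ → Monomial n) (D : Finset (Fin μ)) : Prop :=
  D.Nonempty ∧ ∃ q : Fin μ, m q ≤ mlcm m D ∧ ∀ d ∈ D, q < d

/-- `E` is preserved if no subset of `E` is broken. -/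
def Preserved {n μ : ℕ} (m : Fin μ → Monomial n) (E : Finset (Fin μ)) : Prop :=
  ∀ D ⊆ E, ¬ Broken m D

/-- `F` is stable if removing any element changes the lcm. -/
def Stable {n μ : ℕ} (m : Fin μ → Monomial n) (F : Finset (Fin μ)) : Prop :=
  ∀ w ∈ F, mlcm m (F.erase w) ≠ mlcm m F

/-- `C` is a cover of its element `u` if `m u` divides the lcm of `C \ {u}`. -/
def IsCoverOf {n μ : ℕ} (m : Fin μ → Monomial n) (C : Finset (Fin μ)) (u : Fin μ) : Prop :=
  u ∈ C ∧ m u ≤ mlcm m (C.erase u)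

/-- `C` is a cover if it is a cover of some of its elements. -/
def IsCover {n μ : ℕ} (m : Fin μ → Monomial n) (C : Finset (Fin μ)) : Prop :=
  ∃ u, IsCoverOf m C u

/-- Membership in the Lyubeznik complex `Δ(S,≺)`: for every nonempty `H ⊆ F`, the
≺-least element of `{u ∈ S : u ∣ lcm H}` belongs to `H`. -/
def InLyubeznikComplex {n μ : ℕ} (m : Fin μ → Monomial n) (F : Finset (Fin μ)) : Prop :=
  ∀ H ⊆ F, H.Nonempty → ∃ h ∈ H, ∀ q : Fin μ, m q ≤ mlcm m H → h ≤ q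

/-- The complete cover `C̄(D) = {w ∈ S : w ∣ lcm D}`. -/
noncomputable def CompleteCover {n μ : ℕ} (m : Fin μ → Monomial n) (D : Finset (Fin μ)) :
    Finset (Fin μ) :=
  Finset.univ.filter (fun w => m w ≤ mlcm m D)

/-- `C` is an E-minimal cover of `u`: a cover of `u` none of whose proper subsets covers `u`. -/
def EMinimalCover {n μ : ℕ} (m : Fin μ → Monomial n) (C : Finset (Fin μ)) (u : Fin μ) : Prop :=
  IsCoverOf m C u ∧ ∀ C' ⊂ C, ¬ IsCoverOf m C' u

/-- a preserved cover is L-admissible and not stable. -/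
theorem stmt_4 {n μ : ℕ} (m : Fin μ → Monomial n) (hm : Function.Injective m)
    (C : Finset (Fin μ)) (hpres : Preserved m C) (hcov : IsCover m C) :
    LAdmissible m C ∧ ¬ Stable m C := by
  constructor
  · intro h hh _ q hq hle
    exact hpres (C.filter (fun j => h ≤ j)) (filter_subset _ _)
      ⟨⟨h, mem_filter.mpr ⟨hh, le_refl h⟩⟩,
       q, hle, fun d hd => lt_of_lt_of_le hq (mem_filter.mp hd).2⟩
  · obtain ⟨u, huC, hule⟩ := hcov
    intro hstab
    apply hstab u huC
    apply le_antisymm (sup_mono (erase_subset u C))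
    apply Finset.sup_le
    intro j hj
    rcases eq_or_ne j u with rfl | hne
    · exact hule
    · exact le_sup (mem_erase.mpr ⟨hne, hj⟩)
end

section
/- The following statements are equivalent: (i) for every u ∈ S and every cover C of u, C is not preserved; (ii) for every u ∈ S and every cover C of u, there exist a nonempty D ⊆ C and v ∈ S with v ∉ D, such that D ∪ {v} is a cover of v and the ≺-least element of C̄(D) \ D precedes the ≺-least element of D. -/
open Finset

/-- every cover is non-preserved iff for every cover `C` of `u` there are a
nonempty `D ⊆ C` and `v ∉ D` such that `D ∪ {v}` is a cover of `v` and the ≺-least element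
of `C̄(D) \ D` precedes the ≺-least element of `D`. -/
theorem stmt_7 {n μ : ℕ} (m : Fin μ → Monomial n) (hm : Function.Injective m) :
    (∀ (u : Fin μ) (C : Finset (Fin μ)), IsCoverOf m C u → ¬ Preserved m C) ↔
      (∀ (u : Fin μ) (C : Finset (Fin μ)), IsCoverOf m C u →
        ∃ D ⊆ C, D.Nonempty ∧ ∃ v : Fin μ, v ∉ D ∧ IsCoverOf m (insert v D) v ∧
          (CompleteCover m D \ D).min < D.min) := by
  constructor
  · intro h u C hC
    have hnp := h u C hC
    rw [Preserved] at hnp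
    push_neg at hnp
    obtain ⟨D, hDC, hD, q, hq, hqlt⟩ := hnp
    refine ⟨D, hDC, hD, q, fun hqD => lt_irrefl q (hqlt q hqD), ?_, ?_⟩
    · refine ⟨mem_insert_self q D, ?_⟩
      rw [erase_insert (fun hqD => lt_irrefl q (hqlt q hqD))]
      exact hq
    · have hqmem : q ∈ CompleteCover m D \ D := by
        simp only [mem_sdiff, CompleteCover, mem_filter, mem_univ, true_and]
        exact ⟨hq, fun hqD => lt_irrefl q (hqlt q hqD)⟩
      calc (CompleteCover m D \ D).min ≤ (q : WithTop (Fin μ)) := Finset.min_le hqmem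
        _ < D.min := by
          obtain ⟨b, hb⟩ := Finset.min_of_nonempty hD
          rw [hb]
          exact WithTop.coe_lt_coe.mpr (hqlt b (Finset.mem_of_min hb))
  · intro h u C hC hP
    obtain ⟨D, hDC, hD, v, hvD, hcov, hmin⟩ := h u C hC
    have hne : (CompleteCover m D \ D).Nonempty := by
      rw [Finset.nonempty_iff_ne_empty]
      intro he
      rw [he, Finset.min_empty] at hmin
      exact not_top_lt hmin
    obtain ⟨q, hqmem, hqmin⟩ := Finset.exists_min_image (CompleteCover m D \ D) id hne
    have hqd : m q ≤ mlcm m D := by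
      simp only [mem_sdiff, CompleteCover, mem_filter] at hqmem
      exact hqmem.1.2
    refine hP D hDC ⟨hD, q, hqd, fun d hd => ?_⟩
    have h1 : (CompleteCover m D \ D).min = (q : WithTop (Fin μ)) := by
      apply le_antisymm (Finset.min_le hqmem)
      rw [Finset.le_min_iff]
      exact fun b hb => WithTop.coe_le_coe.mpr (hqmin b hb)
    rw [h1] at hmin
    have := Finset.min_le hd
    exact WithTop.coe_lt_coe.mp (lt_of_lt_of_le hmin this)
end

section
/- The following statements are equivalent: (i) for every u ∈ S and every E-minimal cover C of u, C is not preserved; (ii) for every u ∈ S and every E-minimal cover C of u, there exist a nonempty D ⊆ C and v ∈ S with v ∉ D, such that D ∪ {v} is an E-minimal cover of v and the ≺-least element of C̄(D) \ D precedes the ≺-least element of D. -/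
open Finset

private lemma exists_min_subset {n μ : ℕ} (m : Fin μ → Monomial n) (q : Fin μ)
    (D : Finset (Fin μ)) (hle : m q ≤ mlcm m D) :
    ∃ D' ⊆ D, m q ≤ mlcm m D' ∧ ∀ D'' ⊂ D', ¬ m q ≤ mlcm m D'' := by
  induction D using Finset.strongInductionOn with
  | _ D ih =>
    by_cases h : ∃ D'' ⊂ D, m q ≤ mlcm m D''
    · obtain ⟨D'', hsub, hle'⟩ := h
      obtain ⟨D', h1, h2, h3⟩ := ih D'' hsub hle'
      exact ⟨D', h1.trans hsub.subset, h2, h3⟩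
    · push_neg at h
      exact ⟨D, subset_rfl, hle, h⟩

/-- every E-minimal cover is non-preserved iff for every E-minimal cover `C` of
`u` there are a nonempty `D ⊆ C` and `v ∉ D` such that `D ∪ {v}` is an E-minimal cover of `v`
and the ≺-least element of `C̄(D) \ D` precedes the ≺-least element of `D`. -/
theorem stmt_8 {n μ : ℕ} (m : Fin μ → Monomial n) (hm : Function.Injective m) :
    (∀ (u : Fin μ) (C : Finset (Fin μ)), EMinimalCover m C u → ¬ Preserved m C) ↔
      (∀ (u : Fin μ) (C : Finset (Fin μ)), EMinimalCover m C u →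
        ∃ D ⊆ C, D.Nonempty ∧ ∃ v : Fin μ, v ∉ D ∧ EMinimalCover m (insert v D) v ∧
          (CompleteCover m D \ D).min < D.min)  := by
  constructor
  · intro h1 u C hC
    have hnp := h1 u C hC
    unfold Preserved at hnp
    push_neg at hnp
    obtain ⟨D, hDC, hDne, q, hqle, hqlt⟩ := hnp
    obtain ⟨D', hD'D, hqle', hmin⟩ := exists_min_subset m q D hqle
    rcases D'.eq_empty_or_nonempty with hE | hne
    · -- degenerate: m q = ⊥, contradiction with h1 on {q}
      exfalso
      subst hE
      have hbot : m q = ⊥ := by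
        simpa [mlcm, le_bot_iff] using hqle'
      have hemc : EMinimalCover m {q} q := by
        refine ⟨⟨Finset.mem_singleton_self q, ?_⟩, ?_⟩
        · simp [mlcm, hbot]
        · intro C' hC' hcov
          rw [Finset.ssubset_singleton_iff] at hC'
          subst hC'
          exact absurd hcov.1 (Finset.notMem_empty q)
      refine h1 q {q} hemc ?_
      intro E hE hbrk
      obtain ⟨hEne, q', hq'le, hq'lt⟩ := hbrk
      have hEq : E = {q} := Finset.Nonempty.subset_singleton_iff hEne |>.mp hE
      subst hEq
      have : m q' = ⊥ := by
        have : mlcm m ({q} : Finset (Fin μ)) = m q := by simp [mlcm]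
        rw [this, hbot, le_bot_iff] at hq'le
        exact hq'le
      have hqq : q' = q := hm (this.trans hbot.symm)
      exact absurd (hq'lt q (Finset.mem_singleton_self q)) (by simp [hqq])
    · refine ⟨D', hD'D.trans hDC, hne, q, ?_, ?_, ?_⟩
      · intro hq
        exact absurd (hqlt q (hD'D hq)) (lt_irrefl q)
      · have hqD' : q ∉ D' := fun hq => absurd (hqlt q (hD'D hq)) (lt_irrefl q)
        refine ⟨⟨Finset.mem_insert_self q D', ?_⟩, ?_⟩
        · rw [Finset.erase_insert hqD']
          exact hqle'
        · rintro C' hC' ⟨hqC', hcle⟩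
          have hsub : C'.erase q ⊆ D' := by
            intro x hx
            have hx1 := Finset.mem_of_mem_erase hx
            have hx2 := Finset.ne_of_mem_erase hx
            have := hC'.subset hx1
            rcases Finset.mem_insert.mp this with h | h
            · exact absurd h hx2
            · exact h
          have hne' : C'.erase q ≠ D' := by
            intro heq
            have : C' = insert q D' := by
              rw [← heq, Finset.insert_erase hqC']
            exact absurd this hC'.ne
          exact hmin (C'.erase q) (ssubset_of_subset_of_ne hsub hne') hcle
      · have hqmem : q ∈ CompleteCover m D' \ D' := by
          refine Finset.mem_sdiff.mpr ⟨?_, ?_⟩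
          · exact Finset.mem_filter.mpr ⟨Finset.mem_univ q, hqle'⟩
          · exact fun hq => absurd (hqlt q (hD'D hq)) (lt_irrefl q)
        have h1' : (CompleteCover m D' \ D').min ≤ (q : WithTop (Fin μ)) :=
          Finset.min_le hqmem
        have h2' : (q : WithTop (Fin μ)) < D'.min := by
          obtain ⟨d, hd, hdmin⟩ := D'.exists_min_image id hne
          have : D'.min = (d : WithTop (Fin μ)) := by
            apply le_antisymm (Finset.min_le hd)
            apply Finset.le_min
            intro b hb
            exact_mod_cast hdmin b hb
          rw [this]
          exact_mod_cast hqlt d (hD'D hd)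
        exact lt_of_le_of_lt h1' h2'
  · intro h2 u C hC
    obtain ⟨D, hDC, hDne, v, hv, hemc, hlt⟩ := h2 u C hC
    intro hP
    have hsne : (CompleteCover m D \ D).Nonempty := by
      rw [Finset.nonempty_iff_ne_empty]
      intro he
      rw [he] at hlt
      simp at hlt
    obtain ⟨q, hq⟩ := hsne
    set s := CompleteCover m D \ D with hs
    refine hP D hDC ⟨hDne, s.min' ⟨q, hq⟩, ?_, ?_⟩
    · have := s.min'_mem ⟨q, hq⟩
      have := Finset.mem_sdiff.mp this
      exact (Finset.mem_filter.mp this.1).2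
    · intro d hd
      have h1' : (↑(s.min' ⟨q, hq⟩) : WithTop (Fin μ)) = s.min := Finset.coe_min' _
      have h2' : D.min ≤ (d : WithTop (Fin μ)) := Finset.min_le hd
      have := lt_of_lt_of_le hlt h2'
      rw [← h1'] at this
      exact_mod_cast this
end

section
/- Let G be the simple graph that is a cycle of length 4 on vertices a, b, c, d with edges {a,b}, {b,c}, {c,d}, {a,d}, so S(G) consists of the four edge monomials x_a x_b, x_b x_c, x_c x_d, x_a x_d. Then for every linear order ≺ on S(G), there exists a subset C of S(G) that is a cover of one of its elements and is preserved. -/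
open Finset

/-- The edge monomial of an edge `e = {i,j}`: the indicator exponent vector of `{i,j}`. -/
def edgeMon {V : Type*} [DecidableEq V] (e : Sym2 V) : V → ℕ :=
  fun v => if v ∈ e then 1 else 0

/-- `S(G)`: the set of edge monomials of the graph `G`. -/
noncomputable def SG {V : Type*} [Fintype V] [DecidableEq V] (G : SimpleGraph V)
    [DecidableRel G.Adj] : Finset (V → ℕ) :=
  G.edgeFinset.image edgeMon

/-- A nonempty `D ⊆ S` is broken (w.r.t. the order `prec` on `S`) if some `u ∈ S` divides
`lcm D` and precedes every element of `D`. -/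
def BrokenR {V : Type*} (S : Finset (V → ℕ)) (prec : (V → ℕ) → (V → ℕ) → Prop)
    (D : Finset (V → ℕ)) : Prop :=
  D.Nonempty ∧ ∃ u ∈ S, u ≤ D.sup id ∧ ∀ d ∈ D, prec u d

/-- `E` is preserved (w.r.t. `prec`) if no subset of `E` is broken. -/
def PreservedR {V : Type*} (S : Finset (V → ℕ)) (prec : (V → ℕ) → (V → ℕ) → Prop)
    (E : Finset (V → ℕ)) : Prop :=
  ∀ D ⊆ E, ¬ BrokenR S prec D

/-- The edge monomial `x_i x_j` of the edge `{i, j}`. -/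
def eMon {V : Type*} [DecidableEq V] (i j : V) : V → ℕ :=
  fun v => if v = i ∨ v = j then 1 else 0

lemma eMon_comm {V : Type*} [DecidableEq V] (i j : V) : eMon i j = eMon j i := by
  funext v; simp [eMon, or_comm]

lemma eMon_ne {V : Type*} [DecidableEq V] {i j k l : V} (v : V)
    (h : v = i ∨ v = j) (h1 : v ≠ k) (h2 : v ≠ l) : eMon i j ≠ eMon k l := by
  intro he
  have := congrFun he v
  simp [eMon, h, h1, h2] at this

lemma exists_min {α : Type*} [DecidableEq α] (prec : α → α → Prop) :
    ∀ (S : Finset α),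
    (∀ u ∈ S, ∀ v ∈ S, ∀ w ∈ S, prec u v → prec v w → prec u w) →
    (∀ u ∈ S, ∀ v ∈ S, u ≠ v → prec u v ∨ prec v u) →
    S.Nonempty → ∃ m ∈ S, ∀ v ∈ S, v ≠ m → prec m v := by
  intro S
  induction S using Finset.induction_on with
  | empty => intro _ _ h; exact absurd h (by simp)
  | @insert x T hx ih =>
    intro htrans htot _
    rcases T.eq_empty_or_nonempty with rfl | hT
    · exact ⟨x, by simp, by intro v hv hne; simp at hv; exact absurd hv hne⟩
    · obtain ⟨m, hm, hmin⟩ := ih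
        (fun u hu v hv w hw => htrans u (mem_insert_of_mem hu) v (mem_insert_of_mem hv)
          w (mem_insert_of_mem hw))
        (fun u hu v hv => htot u (mem_insert_of_mem hu) v (mem_insert_of_mem hv)) hT
      have hxm : x ≠ m := fun h => hx (h ▸ hm)
      rcases htot x (mem_insert_self _ _) m (mem_insert_of_mem hm) hxm with h | h
      · refine ⟨x, mem_insert_self _ _, ?_⟩
        intro v hv hvx
        rcases Finset.mem_insert.mp hv with rfl | hvT
        · exact absurd rfl hvx
        · by_cases hvm : v = m
          · exact hvm ▸ h
          · exact htrans x (mem_insert_self _ _) m (mem_insert_of_mem hm) v hv h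
              (hmin v hvT hvm)
      · refine ⟨m, mem_insert_of_mem hm, ?_⟩
        intro v hv hvm
        rcases Finset.mem_insert.mp hv with rfl | hvT
        · exact h
        · exact hmin v hvT hvm

lemma core {V : Type*} [Fintype V] [DecidableEq V] (a b c d : V)
    (hab : a ≠ b) (hac : a ≠ c) (had : a ≠ d) (hbc : b ≠ c) (hbd : b ≠ d) (hcd : c ≠ d)
    (S : Finset (V → ℕ)) (hS : S = {eMon a b, eMon b c, eMon c d, eMon a d})
    (prec : (V → ℕ) → (V → ℕ) → Prop)
    (hirr : ∀ u ∈ S, ¬ prec u u)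
    (htrans : ∀ u ∈ S, ∀ v ∈ S, ∀ w ∈ S, prec u v → prec v w → prec u w)
    (hmin : ∀ v ∈ S, v ≠ eMon a b → prec (eMon a b) v) :
    ∃ C ⊆ S, (∃ u ∈ C, u ≤ (C.erase u).sup id) ∧ PreservedR S prec C := by
  have habS : eMon a b ∈ S := by rw [hS]; simp
  refine ⟨{eMon a b, eMon b c, eMon c d}, ?_, ⟨eMon b c, by simp, ?_⟩, ?_⟩
  · rw [hS]; intro x hx; simp at hx ⊢; tauto
  · -- cover of eMon b c
    have h1 : eMon a b ∈ ({eMon a b, eMon b c, eMon c d} : Finset (V → ℕ)).erase (eMon b c) := by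
      exact Finset.mem_erase.mpr ⟨eMon_ne a (Or.inl rfl) hab hac, by simp⟩
    have h2 : eMon c d ∈ ({eMon a b, eMon b c, eMon c d} : Finset (V → ℕ)).erase (eMon b c) := by
      exact Finset.mem_erase.mpr ⟨eMon_ne d (Or.inr rfl) hbd.symm hcd.symm, by simp⟩
    have l1 := Finset.le_sup (f := id) h1
    have l2 := Finset.le_sup (f := id) h2
    have key : eMon b c ≤ eMon a b ⊔ eMon c d := by
      intro v
      simp only [Pi.sup_apply, eMon]
      split_ifs <;> first | omega | tauto
    exact key.trans (sup_le l1 l2)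
  · -- preserved
    intro D hD hbr
    obtain ⟨⟨d0, hd0⟩, u, huS, hule, hp⟩ := hbr
    have huD : u ∉ D := fun h => hirr u huS (hp u h)
    by_cases hab' : eMon a b ∈ D
    · have h1 := hp _ hab'
      have hne : u ≠ eMon a b := fun h => huD (h ▸ hab')
      exact hirr u huS (htrans u huS _ habS u huS h1 (hmin u huS hne))
    · have hDsub : ∀ x ∈ D, x = eMon b c ∨ x = eMon c d := by
        intro x hx
        have := hD hx
        simp at this
        rcases this with h | h | h
        · exact absurd (h ▸ hx) hab'
        · exact Or.inl h
        · exact Or.inr h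
      have hsup : D.sup id ≤ eMon b c ⊔ eMon c d := by
        refine Finset.sup_le fun x hx => ?_
        rcases hDsub x hx with rfl | rfl
        · exact le_sup_left
        · exact le_sup_right
      have hule2 : u ≤ eMon b c ⊔ eMon c d := hule.trans hsup
      rw [hS] at huS
      simp only [Finset.mem_insert, Finset.mem_singleton] at huS
      have ha0 : (eMon b c ⊔ eMon c d) a = 0 := by
        simp [Pi.sup_apply, eMon, hab, hac, had]
      rcases huS with rfl | rfl | rfl | rfl
      · have := hule2 a; rw [ha0] at this; simp [eMon] at this
      · -- u = eMon b c, so D ⊆ {eMon c d}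
        have hDcd : ∀ x ∈ D, x = eMon c d := by
          intro x hx
          rcases hDsub x hx with rfl | rfl
          · exact absurd hx huD
          · rfl
        have hle := hule.trans (Finset.sup_le fun x hx => le_of_eq (hDcd x hx))
        have := hle b
        simp [eMon, hbc, hbd] at this
      · -- u = eMon c d, so D ⊆ {eMon b c}
        have hDbc : ∀ x ∈ D, x = eMon b c := by
          intro x hx
          rcases hDsub x hx with rfl | rfl
          · rfl
          · exact absurd hx huD
        have hle := hule.trans (Finset.sup_le fun x hx => le_of_eq (hDbc x hx))
        have := hle d
        simp [eMon, hbd.symm, hcd.symm] at this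
      · have := hule2 a; rw [ha0] at this; simp [eMon] at this

/-- for the 4-cycle on vertices `a, b, c, d` with edges `{a,b}`, `{b,c}`,
`{c,d}`, `{a,d}`, so `S(G) = {x_a x_b, x_b x_c, x_c x_d, x_a x_d}`, for every linear order
`prec` on `S(G)` there is a cover `C ⊆ S(G)` of one of its elements which is preserved. -/
theorem stmt_16 {V : Type*} [Fintype V] [DecidableEq V] (a b c d : V)
    (hab : a ≠ b) (hac : a ≠ c) (had : a ≠ d) (hbc : b ≠ c) (hbd : b ≠ d) (hcd : c ≠ d)
    (S : Finset (V → ℕ)) (hS : S = {eMon a b, eMon b c, eMon c d, eMon a d})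
    (prec : (V → ℕ) → (V → ℕ) → Prop)
    (hirr : ∀ u ∈ S, ¬ prec u u)
    (htrans : ∀ u ∈ S, ∀ v ∈ S, ∀ w ∈ S, prec u v → prec v w → prec u w)
    (htot : ∀ u ∈ S, ∀ v ∈ S, u ≠ v → prec u v ∨ prec v u) :
    ∃ C ⊆ S, (∃ u ∈ C, u ≤ (C.erase u).sup id) ∧ PreservedR S prec C := by
  obtain ⟨m, hmS, hmin⟩ := exists_min prec S htrans htot ⟨eMon a b, by rw [hS]; simp⟩
  have hm4 : m = eMon a b ∨ m = eMon b c ∨ m = eMon c d ∨ m = eMon a d := by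
    rw [hS] at hmS; simpa using hmS
  rcases hm4 with rfl | rfl | rfl | rfl
  · exact core a b c d hab hac had hbc hbd hcd S hS prec hirr htrans hmin
  · refine core b c d a hbc hbd hab.symm hcd hac.symm had.symm S ?_ prec hirr htrans hmin
    rw [eMon_comm d a, eMon_comm b a, hS]
    ext x; simp; tauto
  · refine core c d a b hcd hac.symm hbc.symm had.symm hbd.symm hab S ?_ prec hirr htrans hmin
    rw [eMon_comm d a, eMon_comm c b, hS]
    ext x; simp; tauto
  · refine core d a b c had.symm hbd.symm hcd.symm hab hac hbc S ?_ prec hirr htrans ?_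
    · rw [eMon_comm d a, eMon_comm d c, hS]
      ext x; simp; tauto
    · rw [eMon_comm d a]; exact hmin
end
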